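/- Decomposition of the KL divergence between the true model and the full model: KL(m_TRUE || m_FULL) = Σ_δ ∫ v(z) f(δ|n) log( v(z_{-δ}) m(z_δ|δ) / m(z|δ) ) dz + KL(m_TRUE || m_SUB), where m(z|δ) is the full-model conditional marginal of z given δ and m(z_δ|δ) = ∫ m(z|δ) dz_{-δ}. -/

import Mathlib

open MeasureTheory

/-- Kullback–Leibler divergence `Σ_δ ∫ f log(f/g)` between two joint densities over
`(z, δ)`, where for each value of `δ` the data `z` is represented in the coordinates
`Z δ = training × holdout`. -/
noncomputable def KLdiv {Δ : Type*} [Fintype Δ] {Z : Δ → Type*}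
    [∀ δ, MeasurableSpace (Z δ)] (μ : ∀ δ, Measure (Z δ))
    (f g : ∀ δ, Z δ → ℝ) : ℝ :=
  ∑ δ, ∫ z, f δ z * Real.log (f δ z / g δ z) ∂(μ δ)

/-- Decomposition of the KL divergence between the true model and the full
model: `KL(m_TRUE ‖ m_FULL)
  = Σ_δ ∫ v(z) f(δ|n) log( v(z_{-δ}) m(z_δ|δ) / m(z|δ) ) dz + KL(m_TRUE ‖ m_SUB)`. -/
theorem kl_full_decomposition {Δ : Type*} [Fintype Δ]
    {T Hh : Δ → Type*} [∀ δ, MeasurableSpace (T δ)] [∀ δ, MeasurableSpace (Hh δ)]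
    (μT : ∀ δ, Measure (T δ)) (μH : ∀ δ, Measure (Hh δ))
    [∀ δ, SigmaFinite (μT δ)] [∀ δ, SigmaFinite (μH δ)]
    (v m : ∀ δ, T δ × Hh δ → ℝ) (vH : ∀ δ, Hh δ → ℝ) (mT : ∀ δ, T δ → ℝ) (fδ : Δ → ℝ)
    (hvmeas : ∀ δ, Measurable (v δ)) (hmmeas : ∀ δ, Measurable (m δ))
    (hv : ∀ δ z, 0 < v δ z) (hm : ∀ δ z, 0 < m δ z) (hfδ : ∀ δ, 0 ≤ fδ δ)
    (hvHpos : ∀ δ h, 0 < vH δ h) (hmTpos : ∀ δ t, 0 < mT δ t)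
    (hvH : ∀ δ h, vH δ h = ∫ t, v δ (t, h) ∂(μT δ))
    (hmT : ∀ δ t, mT δ t = ∫ h, m δ (t, h) ∂(μH δ))
    (hintF : ∀ δ, Integrable
      (fun z => v δ z * fδ δ * Real.log ((v δ z * fδ δ) / (m δ z * fδ δ)))
      ((μT δ).prod (μH δ)))
    (hintS : ∀ δ, Integrable
      (fun z => v δ z * fδ δ * Real.log ((v δ z * fδ δ) / (vH δ z.2 * mT δ z.1 * fδ δ)))
      ((μT δ).prod (μH δ)))
    (hintM : ∀ δ, Integrable
      (fun z => v δ z * fδ δ * Real.log ((vH δ z.2 * mT δ z.1) / m δ z))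
      ((μT δ).prod (μH δ))) :
    KLdiv (fun δ => (μT δ).prod (μH δ)) (fun δ z => v δ z * fδ δ)
        (fun δ z => m δ z * fδ δ)
      = (∑ δ, ∫ z, v δ z * fδ δ * Real.log ((vH δ z.2 * mT δ z.1) / m δ z)
          ∂((μT δ).prod (μH δ)))
        + KLdiv (fun δ => (μT δ).prod (μH δ)) (fun δ z => v δ z * fδ δ)
            (fun δ z => vH δ z.2 * mT δ z.1 * fδ δ) := by
  unfold KLdiv
  rw [← Finset.sum_add_distrib]
  refine Finset.sum_congr rfl fun δ _ => ?_
  rw [← integral_add (hintM δ) (hintS δ)]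
  refine integral_congr_ae (Filter.Eventually.of_forall fun z => ?_)
  rcases eq_or_lt_of_le (hfδ δ) with h0 | hpos
  · simp [← h0]
  · dsimp only
    have hv' := hv δ z
    have hm' := hm δ z
    have hvH' := hvHpos δ z.2
    have hmT' := hmTpos δ z.1
    have harg : v δ z * fδ δ / (m δ z * fδ δ)
        = vH δ z.2 * mT δ z.1 / m δ z * (v δ z * fδ δ / (vH δ z.2 * mT δ z.1 * fδ δ)) := by
      field_simp
    rw [← mul_add, ← Real.log_mul (by positivity) (by positivity), harg]
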